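/- arXiv:1305.5217 — 2 statements merged into one kernel-verified Lean document; each statement's English description precedes it below -/
import Mathlib

section
/- Let F be a field of characteristic 0 with u-invariant u(F) ≤ 2^n. Then for every m > n, H^m(F, μ_2) = 0; i.e., the 2-cohomological dimension of F is at most n. -/
universe u

namespace SymbolLength

variable {K : Type u} [Field K]

/-- Value of the diagonal quadratic form `⟨a 0, …, a (n-1)⟩` at a vector `x`. -/
def qeval {n : ℕ} (a : Fin n → Kˣ) (x : Fin n → K) : K :=
  ∑ i, (a i : K) * x i ^ 2

/-- Two diagonal forms of the same dimension are isometric if an invertible linear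
change of variables takes one to the other. -/
def IsIsometric {n : ℕ} (a b : Fin n → Kˣ) : Prop :=
  ∃ M : Matrix (Fin n) (Fin n) K, IsUnit M.det ∧ ∀ x, qeval a (M.mulVec x) = qeval b x

/-- The split (hyperbolic) diagonal form `⟨1, -1, 1, -1, …⟩` of dimension `2 * k`. -/
def hyp (K : Type u) [Field K] (k : ℕ) : Fin (2 * k) → Kˣ :=
  fun i => if (i : ℕ) % 2 = 0 then 1 else -1

/-- Witt equivalence of diagonal forms: they become isometric after adding
hyperbolic forms on both sides. -/
def WittEquiv {n m : ℕ} (a : Fin n → Kˣ) (b : Fin m → Kˣ) : Prop :=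
  ∃ (k l : ℕ) (h : n + 2 * k = m + 2 * l),
    IsIsometric ((Fin.append a (hyp K k)) ∘ Fin.cast h.symm) (Fin.append b (hyp K l))

/-- A diagonal form is anisotropic if it represents `0` only trivially. -/
def IsAnisotropicD {n : ℕ} (a : Fin n → Kˣ) : Prop :=
  ∀ x, qeval a x = 0 → x = 0

/-- Base change of a diagonal form along a field embedding. -/
def mapUnits {L : Type u} [Field L] (f : K →+* L) {n : ℕ} (a : Fin n → Kˣ) :
    Fin n → Lˣ :=
  fun i => Units.map f.toMonoidHom (a i)

/-- The `m`-fold Pfister form `⟨⟨u 0, …, u (m-1)⟩⟩ = ⟨1, -u 0⟩ ⊗ ⋯ ⊗ ⟨1, -u (m-1)⟩`,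
written diagonally: the entry at index `i` is `∏_{j ∈ bits i} (-u j)`. -/
def pfister {m : ℕ} (u : Fin m → Kˣ) : Fin (2 ^ m) → Kˣ :=
  fun i => ∏ j : Fin m, if ((i : ℕ)).testBit (j : ℕ) then -(u j) else 1

/-- The orthogonal sum of the `k` Pfister forms `⟨⟨c 0⟩⟩, …, ⟨⟨c (k-1)⟩⟩`. -/
def pfisterSum {k m : ℕ} (c : Fin k → Fin m → Kˣ) : Fin (k * 2 ^ m) → Kˣ :=
  fun i => pfister (c (finProdFinEquiv.symm i).1) (finProdFinEquiv.symm i).2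

/-- The Witt class of `q` lies in `I^m(K)`: since `I^m` is generated as a group by
`m`-fold Pfister forms, this means `q` plus a sum of `m`-fold Pfister forms is Witt
equivalent to a sum of `m`-fold Pfister forms. -/
def MemPowI (m : ℕ) {n : ℕ} (q : Fin n → Kˣ) : Prop :=
  ∃ (k k' : ℕ) (c : Fin k → Fin m → Kˣ) (c' : Fin k' → Fin m → Kˣ),
    WittEquiv (Fin.append q (pfisterSum c)) (pfisterSum c')

/-- `q` (with Witt class in `I^m`) has `m`-Pfister number at most `N`. -/
def PfisterNumberLE (m : ℕ) {n : ℕ} (q : Fin n → Kˣ) (N : ℕ) : Prop :=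
  ∃ (k : ℕ), k ≤ N ∧ ∃ c : Fin k → Fin m → Kˣ, WittEquiv q (pfisterSum c)

/-- The `u`-invariant of `K` is at most `u`: every anisotropic (diagonal) form has
dimension at most `u`. -/
def uInvLE (K : Type u) [Field K] (u : ℕ) : Prop :=
  ∀ (n : ℕ) (a : Fin n → Kˣ), IsAnisotropicD a → n ≤ u

/-- `q` becomes hyperbolic (Witt trivial) over `K`. -/
def IsWittTrivial {n : ℕ} (q : Fin n → Kˣ) : Prop :=
  WittEquiv q (Fin.elim0 : Fin 0 → Kˣ)

end SymbolLength

namespace SymbolLength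

/-- Abstract mod-2 Galois cohomology of a field `F` (char F ≠ 2), with coefficients
`μ₂`, indexed by the finite and infinite extensions of `F` inside a fixed algebraic
closure.  It carries restriction maps, symbols (cup products of classes in
`H^1 = L^*/(L^*)^2`), and the content of the Milnor conjecture: `H^n` is spanned by
symbols (via `e_n` of Pfister forms) and a sum of symbols vanishes exactly when the
corresponding sum of `n`-fold Pfister forms has Witt class in `I^{n+1}`. -/
structure Mod2Cohomology (F : Type u) [Field F] where
  H : ℕ → IntermediateField F (AlgebraicClosure F) → Type u
  ab : ∀ n K, AddCommGroup (H n K)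
  res : ∀ (n : ℕ) {K K' : IntermediateField F (AlgebraicClosure F)},
      K ≤ K' → H n K → H n K'
  res_add : ∀ (n : ℕ) {K K' : IntermediateField F (AlgebraicClosure F)} (h : K ≤ K') (x y : H n K),
      res n h (x + y) = res n h x + res n h y
  res_refl : ∀ (n : ℕ) (K : IntermediateField F (AlgebraicClosure F)) (x : H n K), res n (le_refl K) x = x
  res_trans : ∀ (n : ℕ) {K K' K'' : IntermediateField F (AlgebraicClosure F)} (h : K ≤ K') (h' : K' ≤ K'') (x : H n K),
      res n h' (res n h x) = res n (h.trans h') x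
  symbol : ∀ {n : ℕ} (K : IntermediateField F (AlgebraicClosure F)),
      (Fin n → (↥K)ˣ) → H n K
  res_symbol : ∀ {n : ℕ} {K K' : IntermediateField F (AlgebraicClosure F)} (h : K ≤ K') (a : Fin n → (↥K)ˣ),
      res n h (symbol K a)
        = symbol K' (fun i => Units.map (IntermediateField.inclusion h).toRingHom.toMonoidHom (a i))
  /-- Bloch–Kato / Milnor conjecture (surjectivity): every class is a sum of symbols. -/
  bloch_kato : ∀ (n : ℕ) (K : IntermediateField F (AlgebraicClosure F)) (α : H n K),
      ∃ (k : ℕ) (c : Fin k → Fin n → (↥K)ˣ), α = ∑ i, symbol K (c i)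
  /-- Milnor conjecture (injectivity of `e_n` on `I^n/I^{n+1}`): a sum of symbols is
  zero in `H^n` iff the corresponding sum of `n`-fold Pfister forms lies in `I^{n+1}`. -/
  milnor : ∀ (n : ℕ) (K : IntermediateField F (AlgebraicClosure F)) (k : ℕ) (c : Fin k → Fin n → (↥K)ˣ),
      (∑ i, symbol K (c i)) = 0 ↔ MemPowI (n + 1) (pfisterSum c)

attribute [instance] Mod2Cohomology.ab

end SymbolLength

/-!
By Bloch–Kato every class in `H^m(F)` is a sum of symbols, and by Milnor's conjecture the symbol
of `u` vanishes as soon as the Pfister form `⟨⟨u⟩⟩` lies in `I^{m+1}`, which a hyperbolic form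
certainly does. For `m > n` the form `⟨⟨u⟩⟩` has dimension `2^m > u(F)`, so it is isotropic, and
isotropic Pfister forms are hyperbolic.

The last fact rests on roundness. Writing `⟨⟨u, a⟩⟩ = φ ⊥ -aφ` with `φ` a Pfister form, induction
shows that every value represented by `φ` is a similarity factor of `φ`. If `φ` is anisotropic,
an isotropic vector of `φ ⊥ -aφ` exhibits `a` as a quotient of two values of `φ`, so `-aφ ≅ -φ`
and `φ ⊥ -aφ ≅ φ ⊥ -φ` is hyperbolic.
-/

open QuadraticMap QuadraticForm

namespace DiagonalForm

variable {K : Type*} [Field K] {ι κ ι' κ' : Type*}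

theorem smul_sumElim (c : Kˣ) (a : ι → Kˣ) (b : κ → Kˣ) :
    c • Sum.elim a b = Sum.elim (c • a) (c • b) := by
  ext (i | i) <;> rfl

def sumSelfEquivProdFinTwo (ι : Type*) : ι ⊕ ι ≃ ι × Fin 2 :=
  (Equiv.boolProdEquivSum ι).symm.trans
    ((Equiv.prodComm _ _).trans (Equiv.prodCongr (Equiv.refl ι) finTwoEquiv.symm))

variable [Fintype ι] [Fintype κ] [Fintype ι'] [Fintype κ']

def Isometric (a : ι → Kˣ) (b : κ → Kˣ) : Prop :=
  (weightedSumSquares K a).Equivalent (weightedSumSquares K b)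

theorem weightedSumSquares_units_apply (a : ι → Kˣ) (x : ι → K) :
    weightedSumSquares K a x = ∑ i, (a i : K) * x i ^ 2 := by
  simp [Units.smul_def, pow_two]

theorem weightedSumSquares_smul (c : Kˣ) (a : ι → Kˣ) (x : ι → K) :
    weightedSumSquares K (c • a) x = c * weightedSumSquares K a x := by
  simp only [weightedSumSquares_units_apply, Finset.mul_sum, Pi.smul_apply, smul_eq_mul,
    Units.val_mul, mul_assoc]

theorem sumElim_equivalent_prod (a : ι → Kˣ) (b : κ → Kˣ) :
    (weightedSumSquares K (Sum.elim a b)).Equivalent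
      ((weightedSumSquares K a).prod (weightedSumSquares K b)) :=
  ⟨{ LinearEquiv.sumArrowLequivProdArrow ι κ K K with
    map_app' := fun x => by simp [Fintype.sum_sum_type] }⟩

theorem uncurry_equivalent_pi (g : κ → ι → Kˣ) :
    (weightedSumSquares K (Function.uncurry g)).Equivalent
      (pi fun k => weightedSumSquares K (g k)) :=
  ⟨{ LinearEquiv.curry K K κ ι with
    map_app' := fun x => by simp [Fintype.sum_prod_type] }⟩

namespace Isometric

@[refl]
theorem refl (a : ι → Kˣ) : Isometric a a := Equivalent.refl _

theorem symm {a : ι → Kˣ} {b : κ → Kˣ} (h : Isometric a b) : Isometric b a := Equivalent.symm h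

theorem trans {a : ι → Kˣ} {b : κ → Kˣ} {c : ι' → Kˣ} (h : Isometric a b) (h' : Isometric b c) :
    Isometric a c :=
  Equivalent.trans h h'

theorem smul (c : Kˣ) {a : ι → Kˣ} {b : κ → Kˣ} (h : Isometric a b) :
    Isometric (c • a) (c • b) := by
  obtain ⟨f⟩ := h
  exact ⟨{ f.toLinearEquiv with
    map_app' := fun x => by
      rw [weightedSumSquares_smul, weightedSumSquares_smul]; exact congrArg _ (f.map_app x) }⟩

theorem sumElim {a : ι → Kˣ} {a' : ι' → Kˣ} {b : κ → Kˣ} {b' : κ' → Kˣ}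
    (ha : Isometric a a') (hb : Isometric b b') :
    Isometric (Sum.elim a b) (Sum.elim a' b') :=
  (sumElim_equivalent_prod a b).trans ((ha.prod hb).trans (sumElim_equivalent_prod a' b').symm)

theorem uncurry {g : κ → ι → Kˣ} {g' : κ → ι' → Kˣ} (h : ∀ k, Isometric (g k) (g' k)) :
    Isometric (Function.uncurry g) (Function.uncurry g') :=
  (uncurry_equivalent_pi g).trans ((Equivalent.pi h).trans (uncurry_equivalent_pi g').symm)

end Isometric

instance : @Trans (ι → Kˣ) (κ → Kˣ) (ι' → Kˣ) Isometric Isometric Isometric :=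
  ⟨Isometric.trans⟩

theorem isometric_comp_equiv (e : ι ≃ κ) (b : κ → Kˣ) : Isometric (b ∘ e) b :=
  ⟨{ LinearEquiv.funCongrLeft K K e.symm with
    map_app' := fun x => by
      simp only [weightedSumSquares_units_apply]
      exact (Fintype.sum_equiv e _ _ fun i => by simp [LinearMap.funLeft_apply]).symm }⟩

theorem isometric_of_eq_comp {a : ι → Kˣ} {b : κ → Kˣ} (e : ι ≃ κ) (h : ∀ i, a i = b (e i)) :
    Isometric a b :=
  (funext h : a = b ∘ e) ▸ isometric_comp_equiv e b

theorem isometric_sumElim_comm (a : ι → Kˣ) (b : κ → Kˣ) :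
    Isometric (Sum.elim a b) (Sum.elim b a) :=
  isometric_of_eq_comp (Equiv.sumComm ι κ) (by rintro (i | i) <;> rfl)

theorem isometric_sumElim_of_isEmpty [IsEmpty κ] (a : ι → Kˣ) (b : κ → Kˣ) :
    Isometric (Sum.elim a b) a :=
  isometric_of_eq_comp (Equiv.sumEmpty ι κ) (by rintro (i | i); exacts [rfl, isEmptyElim i])

theorem isometric_sq_smul (u : Kˣ) (a : ι → Kˣ) : Isometric ((u * u) • a) a :=
  ⟨{ LinearEquiv.smulOfUnit u with
    map_app' := fun x => by
      simp only [weightedSumSquares_units_apply]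
      refine Finset.sum_congr rfl fun i _ => ?_
      simp [LinearEquiv.smulOfUnit, Units.smul_def]
      ring }⟩

theorem Isometric.card_eq {a : ι → Kˣ} {b : κ → Kˣ} (h : Isometric a b) :
    Fintype.card ι = Fintype.card κ := by
  obtain ⟨f⟩ := h
  simpa using f.toLinearEquiv.finrank_eq

theorem Isometric.sumElim_smul {s t s' t' : Kˣ} (h : Isometric ![s, t] ![s', t']) (q : ι → Kˣ) :
    Isometric (Sum.elim (s • q) (t • q)) (Sum.elim (s' • q) (t' • q)) := by
  have key {v : Fin 2 → Kˣ} : Isometric (Sum.elim (v 0 • q) (v 1 • q))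
      (Function.uncurry fun i => q i • v) :=
    isometric_of_eq_comp (sumSelfEquivProdFinTwo ι) (by rintro (i | i) <;> exact mul_comm _ _)
  exact (key (v := ![s, t])).trans
    ((Isometric.uncurry fun i => h.smul (q i)).trans (key (v := ![s', t'])).symm)

theorem isometric_of_mulVec [DecidableEq ι] {a b : ι → Kˣ} (M : Matrix ι ι K) (hM : IsUnit M.det)
    (h : ∀ x, weightedSumSquares K a (M.mulVec x) = weightedSumSquares K b x) : Isometric a b :=
  have := M.invertibleOfIsUnitDet hM
  Isometric.symm ⟨{ M.toLinearEquiv' this with map_app' := h }⟩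

theorem isometric_pair {s t c : Kˣ} {x y : K} (h : (c : K) = s * x ^ 2 + t * y ^ 2) :
    Isometric ![s, t] ![c, s * t * c] := by
  -- the columns `(x, y)` and `(t y, -s x)` are orthogonal for `⟨s, t⟩`, of values `c` and `s t c`
  refine isometric_of_mulVec !![x, t * y; y, -(s * x)] ?_ fun z => ?_
  · have hdet : x * -((s : K) * x) - t * y * y = -c := by rw [h]; ring
    rw [Matrix.det_fin_two_of, hdet]
    simp
  · simp only [weightedSumSquares_units_apply, Fin.sum_univ_two, Matrix.mulVec, dotProduct,
      Matrix.of_apply, Matrix.cons_val', Matrix.cons_val_zero, Matrix.cons_val_one,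
      Matrix.empty_val', Matrix.cons_val_fin_one, Units.val_mul, h]
    ring

theorem isometric_pair_neg (h2 : (2 : K) ≠ 0) (a : Kˣ) : Isometric ![a, -a] ![1, -1] := by
  have h : (a : K) = (1 : Kˣ) * ((a + 1) / 2) ^ 2 + (-1 : Kˣ) * ((a - 1) / 2) ^ 2 := by
    field_simp
    push_cast
    ring
  simpa using (isometric_pair h).symm

theorem weightedSumSquares_sumElim (a : ι → Kˣ) (b : κ → Kˣ) (z : ι ⊕ κ → K) :
    weightedSumSquares K (Sum.elim a b) z =
      weightedSumSquares K a (z ∘ Sum.inl) + weightedSumSquares K b (z ∘ Sum.inr) := by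
  simp [Fintype.sum_sum_type]

def similarityFactors (a : ι → Kˣ) : Subgroup Kˣ where
  carrier := {c | Isometric (c • a) a}
  one_mem' := by simpa using Isometric.refl a
  mul_mem' {c d} hc hd := by simpa [mul_smul] using (hd.smul c).trans hc
  inv_mem' {c} hc := by simpa using (hc.smul c⁻¹).symm

theorem mem_similarityFactors {a : ι → Kˣ} {c : Kˣ} :
    c ∈ similarityFactors a ↔ Isometric (c • a) a :=
  Iff.rfl

theorem isometric_mul_smul_of_mem {a : ι → Kˣ} {c : Kˣ} (hc : c ∈ similarityFactors a) (b : Kˣ) :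
    Isometric ((b * c) • a) (b • a) := by
  simpa [mul_smul] using hc.smul b

theorem Isometric.similarityFactors_eq {a : ι → Kˣ} {b : κ → Kˣ} (h : Isometric a b) :
    similarityFactors a = similarityFactors b := by
  ext c
  exact ⟨fun hc => (h.smul c).symm.trans (hc.trans h),
    fun hc => (h.smul c).trans (hc.trans h.symm)⟩

def IsRound (a : ι → Kˣ) : Prop :=
  ∀ (d : Kˣ) (x : ι → K), weightedSumSquares K a x = d → d ∈ similarityFactors a

theorem IsRound.of_isometric {a : ι → Kˣ} {b : κ → Kˣ} (h : Isometric a b) (ha : IsRound a) :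
    IsRound b := by
  intro d x hx
  obtain ⟨f⟩ := id h
  rw [← h.similarityFactors_eq]
  exact ha d (f.symm x) (by rw [← hx, ← f.map_app, f.apply_symm_apply])

theorem isRound_one [Unique ι] : IsRound (1 : ι → Kˣ) := by
  intro d x hx
  have hx0 : x default ≠ 0 := by
    rintro h0
    simp [h0] at hx
    exact d.ne_zero hx.symm
  have hd : d = Units.mk0 _ hx0 * Units.mk0 _ hx0 := by
    ext
    simp [← hx]
  rw [hd]
  exact isometric_sq_smul _ _

theorem anisotropic_one [Unique ι] : (weightedSumSquares K (1 : ι → Kˣ)).Anisotropic := by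
  intro x hx
  ext i
  simpa [Subsingleton.elim i default] using hx

theorem IsRound.sumElim_smul {q : ι → Kˣ} (hq : IsRound q) (a : Kˣ) :
    IsRound (Sum.elim q (a • q)) := by
  intro d z hz
  rw [weightedSumSquares_sumElim, weightedSumSquares_smul] at hz
  set s := weightedSumSquares K q (z ∘ Sum.inl) with hs
  set t := weightedSumSquares K q (z ∘ Sum.inr) with ht
  rw [mem_similarityFactors, smul_sumElim, ← mul_smul]
  rcases eq_or_ne t 0 with ht0 | ht0
  · have hd : d ∈ similarityFactors q := hq d _ (by rw [← hs, ← hz, ht0, mul_zero, add_zero])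
    exact hd.sumElim (by simpa [mul_comm] using isometric_mul_smul_of_mem hd a)
  have htG : Units.mk0 t ht0 ∈ similarityFactors q := hq _ _ rfl
  rcases eq_or_ne s 0 with hs0 | hs0
  · -- `d = a t`, so `d q ≅ a q` and `d a q = a² t q ≅ q`
    have hd : d = a * Units.mk0 t ht0 := by ext; simp [← hz, hs0]
    refine Isometric.trans ?_ (isometric_sumElim_comm _ _)
    subst hd
    refine (isometric_mul_smul_of_mem htG a).sumElim ?_
    rw [show a * Units.mk0 t ht0 * a = a * a * Units.mk0 t ht0 by ac_rfl]
    exact (isometric_mul_smul_of_mem htG _).trans (isometric_sq_smul a q)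
  · -- `⟨s, a t⟩ ≅ ⟨d, s a t d⟩` because `d = s + a t`
    have hsG : Units.mk0 s hs0 ∈ similarityFactors q := hq _ _ rfl
    have hpair := isometric_pair (s := Units.mk0 s hs0) (t := a * Units.mk0 t ht0) (c := d)
      (x := 1) (y := 1) (by simp [← hz])
    have hfactor : Units.mk0 s hs0 * (a * Units.mk0 t ht0) * d =
        d * a * (Units.mk0 s hs0 * Units.mk0 t ht0) := by ac_rfl
    refine Isometric.symm ?_
    refine ((Isometric.symm hsG).sumElim (isometric_mul_smul_of_mem htG a).symm).trans ?_
    refine (hpair.sumElim_smul q).trans ?_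
    rw [hfactor]
    exact (Isometric.refl _).sumElim
      (isometric_mul_smul_of_mem (mul_mem hsG htG) _)

theorem Isometric.anisotropic_iff {a : ι → Kˣ} {b : κ → Kˣ} (h : Isometric a b) :
    (weightedSumSquares K a).Anisotropic ↔ (weightedSumSquares K b).Anisotropic := by
  obtain ⟨f⟩ := h
  constructor
  · intro ha x hx
    simpa using ha (f.symm x) (by rw [← hx, ← f.map_app, f.apply_symm_apply])
  · intro hb x hx
    simpa using hb (f x) (by rw [f.map_app, hx])

theorem isometric_smul_neg_of_not_anisotropic {q : ι → Kˣ} (hq : IsRound q)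
    (hqa : (weightedSumSquares K q).Anisotropic) {a : Kˣ}
    (h : ¬ (weightedSumSquares K (Sum.elim q (a • q))).Anisotropic) :
    Isometric (a • q) (-q) := by
  simp only [Anisotropic, not_forall] at h
  obtain ⟨z, hz, hz0⟩ := h
  rw [weightedSumSquares_sumElim, weightedSumSquares_smul] at hz
  set s := weightedSumSquares K q (z ∘ Sum.inl) with hs
  set t := weightedSumSquares K q (z ∘ Sum.inr) with ht
  have ht0 : t ≠ 0 := by
    intro ht0
    rw [ht0, mul_zero, add_zero] at hz
    have hx := hqa _ hz
    have hy := hqa _ ht0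
    exact hz0 (funext fun i => by rcases i with i | i; exacts [congrFun hx i, congrFun hy i])
  have hst : s = -(a * t) := eq_neg_of_add_eq_zero_left hz
  have hs0 : s ≠ 0 := by simpa [hst] using ht0
  have hneg : -a ∈ similarityFactors q := by
    have : -a = Units.mk0 s hs0 * (Units.mk0 t ht0)⁻¹ := by
      ext
      simp [hst, ht0]
    exact this ▸ mul_mem (hq _ _ hs.symm) (inv_mem (hq _ _ ht.symm))
  have hneg_one : (-1 : Kˣ) • q = -q := by ext; simp
  simpa [← mul_smul, hneg_one] using hneg.smul (-1)

-- For `2 ≠ 0` this is the usual notion, by `SymbolLength.isometric_sumElim_neg_hyp`.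
def IsHyperbolic (a : ι → Kˣ) : Prop :=
  ∃ (l : ℕ) (b : Fin l → Kˣ), Isometric a (Sum.elim b (-b))

theorem IsHyperbolic.of_isometric {a : ι → Kˣ} {b : κ → Kˣ} (h : Isometric a b)
    (hb : IsHyperbolic b) : IsHyperbolic a := by
  obtain ⟨l, c, hc⟩ := hb
  exact ⟨l, c, h.trans hc⟩

theorem isHyperbolic_sumElim_neg (q : ι → Kˣ) : IsHyperbolic (Sum.elim q (-q)) :=
  ⟨_, q ∘ (Fintype.equivFin ι).symm, isometric_of_eq_comp
    ((Fintype.equivFin ι).sumCongr (Fintype.equivFin ι)) (by rintro (i | i) <;> simp)⟩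

theorem IsHyperbolic.smul (c : Kˣ) {a : ι → Kˣ} (h : IsHyperbolic a) : IsHyperbolic (c • a) := by
  obtain ⟨l, b, hb⟩ := h
  exact ⟨l, c • b, by
    simpa [smul_sumElim, show c • -b = -(c • b) from funext fun i => mul_neg c (b i)]
      using hb.smul c⟩

theorem IsHyperbolic.sumElim {a : ι → Kˣ} {b : κ → Kˣ} (ha : IsHyperbolic a)
    (hb : IsHyperbolic b) : IsHyperbolic (Sum.elim a b) := by
  obtain ⟨l, c, hc⟩ := ha
  obtain ⟨l', c', hc'⟩ := hb
  exact (isHyperbolic_sumElim_neg (Sum.elim c c')).of_isometric ((hc.sumElim hc').trans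
    (isometric_of_eq_comp (Equiv.sumSumSumComm _ _ _ _) (by rintro ((i | i) | (i | i)) <;> rfl)))

end DiagonalForm

namespace SymbolLength

open DiagonalForm

variable {K : Type*} [Field K]

theorem qeval_eq_weightedSumSquares {n : ℕ} (a : Fin n → Kˣ) (x : Fin n → K) :
    qeval a x = weightedSumSquares K a x :=
  (weightedSumSquares_units_apply a x).symm

theorem isIsometric_iff_isometric {n : ℕ} {a b : Fin n → Kˣ} : IsIsometric a b ↔ Isometric a b := by
  constructor
  · rintro ⟨M, hM, hMab⟩
    exact isometric_of_mulVec M hM fun x => by simpa [qeval_eq_weightedSumSquares] using hMab x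
  · rintro ⟨f⟩
    refine ⟨LinearMap.toMatrix' (f.symm : (Fin n → K) →ₗ[K] (Fin n → K)), ?_, fun x => ?_⟩
    · rw [LinearMap.det_toMatrix']
      exact f.symm.toLinearEquiv.isUnit_det'
    · rw [LinearMap.toMatrix'_mulVec, qeval_eq_weightedSumSquares, qeval_eq_weightedSumSquares]
      simp


theorem pfister_zero (u : Fin 0 → Kˣ) : pfister u = 1 := by
  ext
  simp [pfister]

theorem isometric_pfister_succ {m : ℕ} (u : Fin (m + 1) → Kˣ) :
    Isometric
      (Sum.elim (pfister (u ∘ Fin.castSucc)) (-u (Fin.last m) • pfister (u ∘ Fin.castSucc)))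
      (pfister u) := by
  refine isometric_of_eq_comp (finSumFinEquiv.trans (finCongr (Nat.two_pow_succ m).symm)) ?_
  rintro (j | j)
  · have hj : ¬ (j : ℕ).testBit m := by simp [Nat.testBit_lt_two_pow j.isLt]
    simp [pfister, Fin.prod_univ_castSucc, hj]
  · have hlow (i : Fin m) : ((j : ℕ) + 2 ^ m).testBit i = (j : ℕ).testBit i := by
      rw [add_comm]
      exact Nat.testBit_two_pow_add_gt i.isLt _
    have hj : ((j : ℕ) + 2 ^ m).testBit m := by
      rw [add_comm, Nat.testBit_two_pow_add_eq, Nat.testBit_lt_two_pow j.isLt, Bool.not_false]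
    simp [pfister, Fin.prod_univ_castSucc, hlow, hj, mul_comm]

theorem isRound_pfister {m : ℕ} (u : Fin m → Kˣ) : IsRound (pfister u) := by
  induction m with
  | zero =>
    have : Unique (Fin (2 ^ 0)) := inferInstanceAs (Unique (Fin 1))
    rw [pfister_zero]
    exact isRound_one
  | succ m ih => exact ((ih _).sumElim_smul _).of_isometric (isometric_pfister_succ u)

theorem isHyperbolic_pfister_of_not_anisotropic {m : ℕ} (u : Fin m → Kˣ)
    (h : ¬ (weightedSumSquares K (pfister u)).Anisotropic) : IsHyperbolic (pfister u) := by
  induction m with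
  | zero =>
    have : Unique (Fin (2 ^ 0)) := inferInstanceAs (Unique (Fin 1))
    exact absurd (by rw [pfister_zero]; exact anisotropic_one) h
  | succ m ih =>
    set q := pfister (u ∘ Fin.castSucc)
    have hsplit := isometric_pfister_succ u
    refine IsHyperbolic.of_isometric hsplit.symm ?_
    by_cases hq : (weightedSumSquares K q).Anisotropic
    · have hneg := isometric_smul_neg_of_not_anisotropic (isRound_pfister _) hq
        (hsplit.anisotropic_iff.not.mpr h)
      exact (isHyperbolic_sumElim_neg q).of_isometric ((Isometric.refl q).sumElim hneg)
    · have hqh := ih _ hq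
      exact hqh.sumElim (hqh.smul _)

theorem isometric_sumElim_neg_hyp (h2 : (2 : K) ≠ 0) {l : ℕ} (b : Fin l → Kˣ) :
    Isometric (Sum.elim b (-b)) (hyp K l) := by
  have hpairs : Isometric (Function.uncurry fun i => ![b i, -b i])
      (Function.uncurry fun (_ : Fin l) => ![(1 : Kˣ), -1]) :=
    Isometric.uncurry fun i => isometric_pair_neg h2 (b i)
  refine ((isometric_of_eq_comp (sumSelfEquivProdFinTwo _) ?_).trans hpairs).trans
    (isometric_of_eq_comp (finProdFinEquiv.trans (finCongr (mul_comm l 2))) ?_)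
  · rintro (i | i) <;> rfl
  · rintro ⟨i, t⟩
    fin_cases t <;> simp [hyp, Nat.add_mod]

theorem isometric_sumElim_append {p r : ℕ} (a : Fin p → Kˣ) (b : Fin r → Kˣ) :
    Isometric (Sum.elim a b) (Fin.append a b) :=
  isometric_of_eq_comp finSumFinEquiv (by rintro (i | i) <;> simp)

theorem wittEquiv_of_isometric {n n' : ℕ} {a : Fin n → Kˣ} {b : Fin n' → Kˣ} (k l : ℕ)
    (h : Isometric (Sum.elim a (hyp K k)) (Sum.elim b (hyp K l))) : WittEquiv a b := by
  have hdim : n + 2 * k = n' + 2 * l := by simpa using h.card_eq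
  refine ⟨k, l, hdim, isIsometric_iff_isometric.mpr ?_⟩
  exact (isometric_comp_equiv (finCongr hdim.symm) _).trans
    ((isometric_sumElim_append _ _).symm.trans (h.trans (isometric_sumElim_append _ _)))

theorem IsHyperbolic.memPowI (h2 : (2 : K) ≠ 0) {n : ℕ} {q : Fin n → Kˣ} (h : IsHyperbolic q)
    (m : ℕ) : MemPowI m q := by
  obtain ⟨l, b, hb⟩ := h
  have : IsEmpty (Fin (0 * 2 ^ m)) := by rw [zero_mul]; infer_instance
  have : IsEmpty (Fin (2 * 0)) := Fin.isEmpty'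
  let c : Fin 0 → Fin m → Kˣ := Fin.elim0
  refine ⟨0, 0, c, c, wittEquiv_of_isometric 0 l ?_⟩
  calc Isometric (Sum.elim (Fin.append q (pfisterSum c)) (hyp K 0)) (Fin.append q (pfisterSum c))
        := isometric_sumElim_of_isEmpty _ _
    Isometric _ (Sum.elim q (pfisterSum c)) := (isometric_sumElim_append _ _).symm
    Isometric _ q := isometric_sumElim_of_isEmpty _ _
    Isometric _ (hyp K l) := hb.trans (isometric_sumElim_neg_hyp h2 b)
    Isometric _ (Sum.elim (hyp K l) (pfisterSum c)) := (isometric_sumElim_of_isEmpty _ _).symm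
    Isometric _ (Sum.elim (pfisterSum c) (hyp K l)) := isometric_sumElim_comm _ _

theorem isAnisotropicD_iff {n : ℕ} {a : Fin n → Kˣ} :
    IsAnisotropicD a ↔ (weightedSumSquares K a).Anisotropic := by
  simp only [IsAnisotropicD, Anisotropic, qeval_eq_weightedSumSquares]

theorem uInvLE_of_ringEquiv {K L : Type u} [Field K] [Field L] (e : K ≃+* L) {N : ℕ}
    (h : uInvLE L N) : uInvLE K N := by
  refine fun d a ha => h d (mapUnits e.toRingHom a) fun x hx => ?_
  have hx' : qeval a (e.symm ∘ x) = 0 := by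
    apply e.injective
    simpa [qeval, mapUnits, map_sum] using hx
  ext i
  simpa using congrFun (ha _ hx') i

theorem isHyperbolic_pfister_of_uInvLE {N m : ℕ} (hu : uInvLE K N) (hN : N < 2 ^ m)
    (u : Fin m → Kˣ) : IsHyperbolic (pfister u) :=
  isHyperbolic_pfister_of_not_anisotropic u fun ha =>
    (hu _ _ (isAnisotropicD_iff.mpr ha)).not_gt hN

theorem Mod2Cohomology.symbol_eq_zero_of_isHyperbolic {F : Type u} [Field F]
    (C : Mod2Cohomology F) {K : IntermediateField F (AlgebraicClosure F)} (h2 : (2 : K) ≠ 0)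
    {m : ℕ} {u : Fin m → Kˣ} (h : IsHyperbolic (pfister u)) : C.symbol K u = 0 := by
  have hsum := C.milnor m K 1 fun _ => u
  rw [Fin.sum_univ_one] at hsum
  refine hsum.mpr (IsHyperbolic.memPowI h2 (h.of_isometric ?_) _)
  exact isometric_of_eq_comp (finProdFinEquiv.symm.trans (Equiv.uniqueProd _ _)) fun _ => rfl

end SymbolLength

open SymbolLength in
/-- If `F` has characteristic `0` and `u(F) ≤ 2^n`, then `H^m(F, μ₂) = 0` for all
`m > n`; i.e. `cd₂(F) ≤ n`. -/
theorem vanishing_of_uInv_le (F : Type u) [Field F] [CharZero F]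
    (C : Mod2Cohomology F) (n : ℕ) (hu : uInvLE F (2 ^ n)) :
    ∀ m : ℕ, n < m → ∀ α : C.H m ⊥, α = 0 := by
  intro m hm α
  let e := (IntermediateField.botEquiv F (AlgebraicClosure F)).toRingEquiv
  have h2 : (2 : ↥(⊥ : IntermediateField F (AlgebraicClosure F))) ≠ 0 :=
    (map_ne_zero e).mp (by simp)
  obtain ⟨k, c, rfl⟩ := C.bloch_kato m ⊥ α
  exact Finset.sum_eq_zero fun i _ => C.symbol_eq_zero_of_isHyperbolic h2 <|
    isHyperbolic_pfister_of_uInvLE (uInvLE_of_ringEquiv e hu) (Nat.pow_lt_pow_right one_lt_two hm) _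
end

section
/- Suppose H' is a presentable Abelian F-functor with presentation A_1 →^g A_0 →^f H' → 0, H is an Abelian F-functor, and φ: H' → H is a morphism injective on L-points for every field extension L/F. If α ∈ H(F) is the image under φ of α' ∈ H'(F) and ã ∈ A_0(F) is a preimage of α' under f, then the fiber X = g^{-1}(ã) is a generic splitting scheme for α: for every field extension L/F, X(L) ≠ ∅ if and only if α_L = 0. -/
universe u

open CategoryTheory Opposite

namespace PresentableFunctors

variable (T : Type u) [CommRing T]

/-- The category of commutative `T`-algebras, as commutative rings under `T`. -/
abbrev CAlg := Under (CommRingCat.of T)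

/-- An Abelian `T`-functor: a functor from commutative `T`-algebras to Abelian
groups. -/
abbrev AbFunctor := CAlg T ⥤ AddCommGrpCat.{u}

/-- An Abelian `T`-functor is affine if its underlying set-valued functor is
representable by a (spectrum of a) commutative `T`-algebra, i.e. if it is an affine
`T`-group scheme. -/
def IsAffineGroup (A : AbFunctor T) : Prop :=
  ∃ R : CAlg T, Nonempty ((A ⋙ forget AddCommGrpCat) ≅ coyoneda.obj (op R))

/-- A presentation of an Abelian `T`-functor `H`: affine `T`-group schemes `A₁, A₀`
and an exact sequence `A₁ → A₀ → H → 0` (exactness evaluated at every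
`T`-algebra). -/
structure Presentation (H : AbFunctor T) where
  A₁ : AbFunctor T
  A₀ : AbFunctor T
  affine₁ : IsAffineGroup T A₁
  affine₀ : IsAffineGroup T A₀
  g : A₁ ⟶ A₀
  f : A₀ ⟶ H
  exact : ∀ S : CAlg T, Function.Exact (g.app S) (f.app S)
  surj : ∀ S : CAlg T, Function.Surjective (f.app S)

/-- A presentable Abelian `T`-functor. -/
def IsPresentable (H : AbFunctor T) : Prop := Nonempty (Presentation T H)

end PresentableFunctors

namespace PresentableFunctors

open CategoryTheory

variable (F : Type u) [CommRing F]

/-- `F` as the initial object of the category of commutative `F`-algebras. -/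
def baseObj : CAlg F := Under.mk (𝟙 (CommRingCat.of F))

/-- The unique `F`-algebra map from `F` to an `F`-algebra `S`. -/
def toAlg (S : CAlg F) : baseObj F ⟶ S := Under.homMk S.hom (by simp [baseObj])

end PresentableFunctors

namespace PresentableFunctors

variable {T : Type u} [CommRing T]

theorem Presentation.fiber_nonempty_iff {H : AbFunctor T} (P : Presentation T H)
    {R S : CAlg T} (h : R ⟶ S) (a : P.A₀.obj R) :
    (∃ x : P.A₁.obj S, P.g.app S x = P.A₀.map h a) ↔ H.map h (P.f.app R a) = 0 := by
  rw [← NatTrans.naturality_apply]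
  exact (P.exact S _).symm

theorem map_app_eq_zero_iff {H' H : AbFunctor T} (φ : H' ⟶ H) {R S : CAlg T} (h : R ⟶ S)
    (hφ : Function.Injective (φ.app S)) (a : H'.obj R) :
    H.map h (φ.app R a) = 0 ↔ H'.map h a = 0 := by
  rw [← NatTrans.naturality_apply, map_eq_zero_iff _ hφ]

end PresentableFunctors

open CategoryTheory Opposite PresentableFunctors in
/-- Generic splitting schemes from presentations: if `H'` is presentable with
presentation `A₁ →g A₀ →f H' → 0`, `φ : H' ⟶ H` is injective on `L`-points for all
field extensions `L/F`, `α = φ(α')` and ``t` ∈ A₀(F)` lifts `α'`, then the fiber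
`X = g⁻¹(ã)` is a generic splitting scheme for `α`: for every field extension `L/F`,
`X(L) ≠ ∅` iff `α_L = 0`. -/
theorem fiber_is_generic_splitting_scheme (F : Type u) [Field F]
    (H' H : AbFunctor F) (P : Presentation F H') (φ : H' ⟶ H)
    (hinj : ∀ S : CAlg F, IsField ↥S.right → Function.Injective (φ.app S))
    (α' : H'.obj (baseObj F)) (t : P.A₀.obj (baseObj F))
    (hlift : P.f.app (baseObj F) t = α') :
    ∀ S : CAlg F, IsField ↥S.right →
      ((∃ x : P.A₁.obj S, P.g.app S x = P.A₀.map (toAlg F S) t) ↔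
        H.map (toAlg F S) (φ.app (baseObj F) α') = 0) := by
  intro S hS
  rw [P.fiber_nonempty_iff, hlift, map_app_eq_zero_iff φ _ (hinj S hS)]
end
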